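/- On the complex plane ℂ with coordinates (s, φ), where s = r²/2 and φ is the angular coordinate, any continuous section flat along the leaves (i.e. of the local form a(s)·e^{isφ}) defined on an open disc U centered at the origin is identically zero. -/

import Mathlib

/-!
Along the leaf of radius `√(2s)` a flat section solves `f' = i s f` in the angle, so going once
around the circle multiplies it by `exp (2πis)`. For `s ∉ ℤ` this holonomy is not `1`, so the
section vanishes on that leaf. Along any ray from the origin these leaves are dense, and
continuity forces the section to vanish everywhere on the disc.
-/

open Complex Set
open scoped Real

theorem eq_exp_mul_mul_of_hasDerivAt {c : ℂ} {f : ℝ → ℂ} (hf : ∀ x, HasDerivAt f (c * f x) x)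
    (x : ℝ) : f x = exp (c * x) * f 0 := by
  have hderiv (y : ℝ) : HasDerivAt (fun y : ℝ => exp (-c * y) * f y) 0 y := by
    have hlin : HasDerivAt (fun y : ℝ => -c * y) (-c) y := by
      simpa using (hasDerivAt_id y).ofReal_comp.const_mul (-c)
    exact (hlin.cexp.mul (hf y)).congr_deriv (by ring)
  have hconst : exp (-c * x) * f x = f 0 := by
    simpa using is_const_of_deriv_eq_zero (fun y => (hderiv y).differentiableAt)
      (fun y => (hderiv y).deriv) x 0
  rw [← hconst, ← mul_assoc, ← exp_add, neg_mul, add_neg_cancel, exp_zero, one_mul]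

theorem exp_two_pi_mul_I_mul_ne_one {s : ℝ} (hs : ∀ n : ℤ, s ≠ n) : exp (2 * π * I * s) ≠ 1 := by
  rw [Ne, exp_eq_one_iff]
  rintro ⟨n, hn⟩
  apply hs n
  have h2πI : 2 * π * I ≠ 0 := by simp [Real.pi_ne_zero]
  exact_mod_cast mul_left_cancel₀ h2πI (hn.trans (mul_comm _ _))

theorem eq_zero_of_hasDerivAt_I_mul_of_periodic {s : ℝ} (hs : ∀ n : ℤ, s ≠ n) {f : ℝ → ℂ}
    (hf : ∀ x, HasDerivAt f (I * s * f x) x) (hper : Function.Periodic f (2 * π)) (x : ℝ) :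
    f x = 0 := by
  have hholonomy : f 0 = exp (2 * π * I * s) * f 0 := by
    calc f 0 = f (2 * π) := by simpa using (hper 0).symm
      _ = exp (I * s * (2 * π : ℝ)) * f 0 := eq_exp_mul_mul_of_hasDerivAt hf _
      _ = exp (2 * π * I * s) * f 0 := by push_cast; ring_nf
  have hf0 : f 0 = 0 := by
    have : (exp (2 * π * I * s) - 1) * f 0 = 0 := by linear_combination -hholonomy
    exact (mul_eq_zero.mp this).resolve_left (sub_ne_zero.mpr (exp_two_pi_mul_I_mul_ne_one hs))
  rw [eq_exp_mul_mul_of_hasDerivAt hf x, hf0, mul_zero]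

theorem flat_section_on_circle_eq_zero {σ : ℂ → ℂ} {ρ : ℂ} {s : ℝ} (hs : ∀ n : ℤ, s ≠ n)
    (hflat : ∀ φ : ℝ,
      HasDerivAt (fun φ' : ℝ => σ (ρ * exp (I * φ'))) (I * s * σ (ρ * exp (I * φ))) φ)
    (φ : ℝ) : σ (ρ * exp (I * φ)) = 0 :=
  eq_zero_of_hasDerivAt_I_mul_of_periodic hs hflat
    (fun φ => by simp only [ofReal_add, ofReal_mul, mul_add, exp_add, mul_comm I (2 * π : ℂ),
      ofReal_ofNat, exp_two_pi_mul_I, mul_one]) φ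

theorem eqOn_Ico_of_eq_off_countable {E : Type*} [TopologicalSpace E] [T2Space E] {g : ℝ → E}
    {c : E} {a b : ℝ} {C : Set ℝ} (hab : a < b) (hC : C.Countable) (hg : ContinuousOn g (Ico a b))
    (hgc : ∀ s ∈ Ioo a b, s ∉ C → g s = c) : EqOn g (fun _ => c) (Ico a b) := by
  refine EqOn.of_subset_closure (s := Ioo a b ∩ Cᶜ) (fun s hs => hgc s hs.1 hs.2) hg
    continuousOn_const (inter_subset_left.trans Ioo_subset_Ico_self) ?_
  calc Ico a b ⊆ Icc a b := Ico_subset_Icc_self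
    _ = closure (Ioo a b) := (closure_Ioo hab.ne).symm
    _ ⊆ closure (Ioo a b ∩ Cᶜ) :=
      closure_minimal ((hC.dense_compl ℝ).open_subset_closure_inter isOpen_Ioo) isClosed_closure

theorem statement12_general (r : ℝ) (σ : ℂ → ℂ)
    (hσ : ContinuousOn σ (Metric.ball (0 : ℂ) r))
    (hflat : ∀ s : ℝ, 0 < s → Real.sqrt (2 * s) < r → ∀ φ : ℝ,
      HasDerivAt (fun φ' : ℝ => σ ((Real.sqrt (2 * s) : ℂ) * Complex.exp (Complex.I * (φ' : ℂ))))
        (Complex.I * (s : ℂ) * σ ((Real.sqrt (2 * s) : ℂ) * Complex.exp (Complex.I * (φ : ℂ)))) φ) :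
    ∀ z ∈ Metric.ball (0 : ℂ) r, σ z = 0 := by
  intro z hz
  have hzr : ‖z‖ < r := mem_ball_zero_iff.mp hz
  have hr : 0 < r := (norm_nonneg z).trans_lt hzr
  have hray : MapsTo (fun s : ℝ => (√(2 * s) : ℂ) * exp (I * arg z)) (Ico 0 (r ^ 2 / 2))
      (Metric.ball 0 r) := by
    intro s hs
    rw [mem_ball_zero_iff, norm_mul, mul_comm I, norm_exp_ofReal_mul_I, mul_one, norm_real,
      Real.norm_of_nonneg (Real.sqrt_nonneg _), Real.sqrt_lt' hr]
    linarith [hs.2]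
  have hzero_on_ray := eqOn_Ico_of_eq_off_countable (C := range ((↑) : ℤ → ℝ)) (by positivity)
    (countable_range _) (hσ.comp (by fun_prop) hray) fun s hs hsC =>
      flat_section_on_circle_eq_zero (fun n hn => hsC ⟨n, hn.symm⟩)
        (hflat s hs.1 ((Real.sqrt_lt' hr).mpr (by linarith [hs.2]))) (arg z)
  have hz' : ‖z‖ ^ 2 / 2 ∈ Ico 0 (r ^ 2 / 2) :=
    ⟨by positivity, by nlinarith [norm_nonneg z]⟩
  simpa [mul_div_cancel₀, Real.sqrt_sq (norm_nonneg z), mul_comm I,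
    norm_mul_exp_arg_mul_I] using hzero_on_ray hz'

/-- On ℂ with coordinates (s,φ), s = r²/2, any continuous section
flat along the leaves (circles of constant s) on an open disc U around the
origin is identically zero.  Flatness along the leaf of radius √(2s) is the
ODE ∂σ/∂φ = i·s·σ along the circle. -/
theorem statement12 (r : ℝ) (hr : 0 < r) (σ : ℂ → ℂ)
    (hσ : ContinuousOn σ (Metric.ball (0 : ℂ) r))
    (hflat : ∀ s : ℝ, 0 < s → Real.sqrt (2 * s) < r → ∀ φ : ℝ,
      HasDerivAt (fun φ' : ℝ => σ ((Real.sqrt (2 * s) : ℂ) * Complex.exp (Complex.I * (φ' : ℂ))))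
        (Complex.I * (s : ℂ) * σ ((Real.sqrt (2 * s) : ℂ) * Complex.exp (Complex.I * (φ : ℂ)))) φ) :
    ∀ z ∈ Metric.ball (0 : ℂ) r, σ z = 0 :=
  statement12_general r σ hσ hflat
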